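/- Let 𝒜 be a Hilbert evolution algebra with a natural orthonormal basis 𝓑 = {e_i}_{i∈ℕ} and structural constants ω_{ik}. Then Σ_{k=1}^∞ |ω_{ik}|² = ‖e_i·e_i‖² < ∞ for every i ∈ ℕ, and consequently the weighted adjacency operator Ω of the associated digraph G(𝒜,𝓑) is densely defined on ℓ²(ℕ). Moreover, if in addition Σ_{i=1}^∞ |ω_{ik}|² < ∞ for every k ∈ ℕ, then Ω is a closed operator. -/

import Mathlib

noncomputable section

open Complex

/-- The Hilbert space `ℓ²(ℕ, ℂ)`. -/
abbrev L2 : Type := lp (fun _ : ℕ => ℂ) 2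

/-- The (everywhere-given, possibly junk-valued) formula for the weighted adjacency
operator: `(Ω v) k = ∑' i, v i * ω i k`. -/
def OmF (ω : ℕ → ℕ → ℂ) (v : ℕ → ℂ) : ℕ → ℂ := fun k => ∑' i, v i * ω i k

/-- The domain of the weighted adjacency operator. -/
def OmDom (ω : ℕ → ℕ → ℂ) : Submodule ℂ L2 where
  carrier := {v : L2 | (∀ k, Summable fun i => (v : ℕ → ℂ) i * ω i k) ∧ Memℓp (OmF ω (v : ℕ → ℂ)) 2}
  zero_mem' := by
    constructor
    · intro k
      simp only [lp.coeFn_zero, Pi.zero_apply, zero_mul]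
      exact summable_zero
    · have : OmF ω ((0 : L2) : ℕ → ℂ) = 0 := by
        funext k
        simp [OmF, lp.coeFn_zero]
      rw [this]
      exact zero_memℓp
  add_mem' := by
    rintro a b ⟨ha1, ha2⟩ ⟨hb1, hb2⟩
    constructor
    · intro k
      have : (fun i => ((a + b : L2) : ℕ → ℂ) i * ω i k)
          = fun i => (a : ℕ → ℂ) i * ω i k + (b : ℕ → ℂ) i * ω i k := by
        funext i
        simp [lp.coeFn_add, add_mul]
      rw [this]
      exact (ha1 k).add (hb1 k)
    · have : OmF ω ((a + b : L2) : ℕ → ℂ) = OmF ω (a : ℕ → ℂ) + OmF ω (b : ℕ → ℂ) := by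
        funext k
        simp only [OmF, Pi.add_apply]
        rw [← Summable.tsum_add (ha1 k) (hb1 k)]
        congr 1
        funext i
        simp [lp.coeFn_add, add_mul]
      rw [this]
      exact ha2.add hb2
  smul_mem' := by
    rintro c a ⟨ha1, ha2⟩
    constructor
    · intro k
      have : (fun i => ((c • a : L2) : ℕ → ℂ) i * ω i k)
          = fun i => c * ((a : ℕ → ℂ) i * ω i k) := by
        funext i
        simp [lp.coeFn_smul, mul_assoc]
      rw [this]
      exact (ha1 k).mul_left c
    · have : OmF ω ((c • a : L2) : ℕ → ℂ) = c • OmF ω (a : ℕ → ℂ) := by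
        funext k
        simp only [OmF, Pi.smul_apply, smul_eq_mul]
        rw [← tsum_mul_left]
        congr 1
        funext i
        simp [lp.coeFn_smul, mul_assoc]
      rw [this]
      exact ha2.const_smul c

theorem mem_OmDom {ω : ℕ → ℕ → ℂ} {v : L2} :
    v ∈ OmDom ω ↔ (∀ k, Summable fun i => (v : ℕ → ℂ) i * ω i k) ∧
      Memℓp (OmF ω (v : ℕ → ℂ)) 2 := Iff.rfl

/-- The underlying linear map of the weighted adjacency operator. -/
def OmLM (ω : ℕ → ℕ → ℂ) : OmDom ω →ₗ[ℂ] L2 where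
  toFun v := ⟨OmF ω ((v : L2) : ℕ → ℂ), (mem_OmDom.mp v.2).2⟩
  map_add' a b := by
    apply Subtype.ext
    funext k
    simp only [lp.coeFn_add, Pi.add_apply]
    show OmF ω (((a : L2) + (b : L2) : L2) : ℕ → ℂ) k = _
    simp only [OmF]
    rw [← Summable.tsum_add ((mem_OmDom.mp a.2).1 k) ((mem_OmDom.mp b.2).1 k)]
    congr 1
    funext i
    simp [lp.coeFn_add, add_mul]
  map_smul' c a := by
    apply Subtype.ext
    funext k
    simp only [lp.coeFn_smul, Pi.smul_apply, RingHom.id_apply, smul_eq_mul]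
    show OmF ω ((c • (a : L2) : L2) : ℕ → ℂ) k = _
    simp only [OmF]
    rw [← tsum_mul_left]
    congr 1
    funext i
    simp [lp.coeFn_smul, mul_assoc]

/-- The weighted adjacency operator `Ω` as an unbounded operator on `ℓ²(ℕ,ℂ)`. -/
def OmegaOp (ω : ℕ → ℕ → ℂ) : L2 →ₗ.[ℂ] L2 := ⟨OmDom ω, OmLM ω⟩

/-- The subspace `D₀` of finitely supported sequences: the span of the standard basis. -/
def finSupp : Submodule ℂ L2 := Submodule.span ℂ (Set.range fun i : ℕ => lp.single 2 i (1 : ℂ))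

end

noncomputable section

variable {H : Type*} [NormedAddCommGroup H] [InnerProductSpace ℂ H] [CompleteSpace H]

/-- The structural constants of a Hilbert evolution algebra with product `mul` relative to
the natural orthonormal basis `e`: `ω i k` is the `k`-th coordinate of `e i · e i`,
so that `e i · e i = ∑'_k ω i k • e k`. -/
def structConst (mul : H →ₗ[ℂ] H →ₗ[ℂ] H) (e : HilbertBasis ℕ ℂ H) (i k : ℕ) : ℂ :=
  e.repr (mul (e i) (e i)) k

/-!
The rows of `ω` are the coordinate sequences of the squares `e i · e i`, so Parseval computes their
`ℓ²` norms. A square-summable row `i` puts `δ i` in the domain of `Ω`, with `Ω δ i` the row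
itself; hence the domain contains the finitely supported sequences and is dense.
If moreover every column is square-summable, then `(Ω v) k = ⟪conj (column k), v⟫` converges for
every `v ∈ ℓ²` and is continuous in `v`, so the graph of `Ω` is the intersection of the closed
sets `{(v, w) | (Ω v) k = w k}`.
-/

section

variable {α : Type*} {E : α → Type*} [∀ i, NormedAddCommGroup (E i)]

theorem memℓp_two_iff_summable_sq {f : ∀ i, E i} :
    Memℓp f 2 ↔ Summable fun i => ‖f i‖ ^ 2 := by
  rw [memℓp_gen_iff (by norm_num)]
  norm_num

theorem lp.hasSum_norm_sq (f : lp E 2) : HasSum (fun i => ‖f i‖ ^ 2) (‖f‖ ^ 2) := by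
  simpa using lp.hasSum_norm (p := 2) (by norm_num) f

end

theorem HilbertBasis.hasSum_norm_repr_sq {ι 𝕜 E : Type*} [RCLike 𝕜] [NormedAddCommGroup E]
    [InnerProductSpace 𝕜 E] (b : HilbertBasis ι 𝕜 E) (x : E) :
    HasSum (fun i => ‖b.repr x i‖ ^ 2) (‖x‖ ^ 2) := by
  simpa using lp.hasSum_norm_sq (b.repr x)

theorem dense_finSupp : Dense (finSupp : Set L2) := by
  let b := HilbertBasis.ofRepr (LinearIsometryEquiv.refl ℂ L2)
  have hb : ⇑b = fun i => lp.single 2 i (1 : ℂ) := funext fun i => by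
    rw [← b.repr_symm_single]; rfl
  rw [Submodule.dense_iff_topologicalClosure_eq_top, finSupp, ← hb]
  exact b.dense_span

namespace OmegaOp

variable {ω : ℕ → ℕ → ℂ}

theorem single_mem_OmDom {i : ℕ} (hi : Memℓp (ω i) 2) : lp.single 2 i (1 : ℂ) ∈ OmDom ω := by
  have hterm : ∀ k, (fun j => (lp.single 2 i (1 : ℂ) : ℕ → ℂ) j * ω j k) =
      Pi.single (M := fun _ => ℂ) i (ω i k) := by
    intro k; funext j
    by_cases hj : j = i
    · subst hj; simp
    · simp [hj]
  refine ⟨fun k => ?_, ?_⟩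
  · rw [hterm]
    exact (hasSum_pi_single i _).summable
  · have : OmF ω (lp.single 2 i (1 : ℂ) : ℕ → ℂ) = ω i := by
      funext k
      rw [OmF, hterm, tsum_pi_single]
    rwa [this]

theorem hasSum_OmF_apply {k : ℕ} (hk : Memℓp (fun i => ω i k) 2) (v : L2) :
    HasSum (fun i => (v : ℕ → ℂ) i * ω i k) (inner ℂ (star (⟨_, hk⟩ : L2)) v) := by
  have hterm : ∀ i, (v : ℕ → ℂ) i * ω i k = inner ℂ ((star (⟨_, hk⟩ : L2) : ℕ → ℂ) i) (v i) :=
    fun i => by simp [RCLike.inner_apply, mul_comm]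
  rw [funext hterm]
  exact lp.hasSum_inner (star (⟨_, hk⟩ : L2)) v

theorem continuous_OmF_apply {k : ℕ} (hk : Memℓp (fun i => ω i k) 2) :
    Continuous fun v : L2 => OmF ω v k :=
  (continuous_const.inner continuous_id).congr fun v => (hasSum_OmF_apply hk v).tsum_eq.symm

theorem mem_graph_iff (hcol : ∀ k, Memℓp (fun i => ω i k) 2) {p : L2 × L2} :
    p ∈ (OmegaOp ω).graph ↔ ∀ k, OmF ω p.1 k = p.2 k := by
  rw [LinearPMap.mem_graph_iff]
  constructor
  · rintro ⟨v, hv, hΩv⟩ k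
    rw [← hv, ← hΩv]
    rfl
  · intro h
    have hOmF : OmF ω p.1 = p.2 := funext h
    refine ⟨⟨p.1, fun k => (hasSum_OmF_apply (hcol k) p.1).summable, ?_⟩, rfl, ?_⟩
    · rw [hOmF]; exact lp.memℓp p.2
    · exact lp.ext hOmF

theorem finSupp_le_OmDom (hrow : ∀ i, Memℓp (ω i) 2) : finSupp ≤ OmDom ω :=
  Submodule.span_le.mpr <| Set.range_subset_iff.mpr fun i => single_mem_OmDom (hrow i)

theorem dense_domain (hrow : ∀ i, Memℓp (ω i) 2) : Dense ((OmegaOp ω).domain : Set L2) :=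
  dense_finSupp.mono (finSupp_le_OmDom hrow)

theorem isClosed (hcol : ∀ k, Memℓp (fun i => ω i k) 2) : (OmegaOp ω).IsClosed := by
  have hgraph : ((OmegaOp ω).graph : Set (L2 × L2)) =
      ⋂ k, {p : L2 × L2 | OmF ω p.1 k = p.2 k} := by
    ext p
    simp only [SetLike.mem_coe, mem_graph_iff hcol, Set.mem_iInter, Set.mem_ofPred_eq]
  rw [LinearPMap.IsClosed, hgraph]
  exact isClosed_iInter fun k => isClosed_eq ((continuous_OmF_apply (hcol k)).comp continuous_fst)
    ((lp.evalCLM ℂ _ 2 k).continuous.comp continuous_snd)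

end OmegaOp

theorem stmt_6_general
    (mul : H →ₗ[ℂ] H →ₗ[ℂ] H)
    (e : HilbertBasis ℕ ℂ H)
    (ω : ℕ → ℕ → ℂ)
    (hω : ∀ i k : ℕ, ω i k = structConst mul e i k) :
    (∀ i : ℕ, Summable fun k => ‖ω i k‖ ^ 2) ∧
    (∀ i : ℕ, (∑' k : ℕ, ‖ω i k‖ ^ 2) = ‖mul (e i) (e i)‖ ^ 2) ∧
    Dense ((OmegaOp ω).domain : Set L2) ∧
    ((∀ k : ℕ, Summable fun i => ‖ω i k‖ ^ 2) → (OmegaOp ω).IsClosed) := by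
  have hrow_eq : ∀ i, ω i = e.repr (mul (e i) (e i)) := fun i => funext (hω i)
  have hparseval : ∀ i, HasSum (fun k => ‖ω i k‖ ^ 2) (‖mul (e i) (e i)‖ ^ 2) := fun i => by
    simpa only [hrow_eq] using e.hasSum_norm_repr_sq (mul (e i) (e i))
  refine ⟨fun i => (hparseval i).summable, fun i => (hparseval i).tsum_eq,
    OmegaOp.dense_domain fun i => ?_, fun hcol => OmegaOp.isClosed fun k => ?_⟩
  · exact memℓp_two_iff_summable_sq.mpr (hparseval i).summable
  · exact memℓp_two_iff_summable_sq.mpr (hcol k)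

/-- Let `𝒜` be a complex separable Hilbert evolution algebra with natural
orthonormal basis `𝓑 = {e i}` and structural constants `ω i k`. Then
`∑_k |ω i k|² = ‖e i · e i‖² < ∞` for every `i`, hence the weighted adjacency operator `Ω`
of the associated digraph `G(𝒜,𝓑)` is densely defined on `ℓ²(ℕ,ℂ)`; and if moreover
`∑_i |ω i k|² < ∞` for every `k`, then `Ω` is a closed operator. -/
theorem stmt_6
    (mul : H →ₗ[ℂ] H →ₗ[ℂ] H)
    (hcomm : ∀ x y : H, mul x y = mul y x)
    (hcont : ∀ x : H, Continuous fun y => mul x y)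
    (e : HilbertBasis ℕ ℂ H)
    (hnat : ∀ i j : ℕ, i ≠ j → mul (e i) (e j) = 0)
    (ω : ℕ → ℕ → ℂ)
    (hω : ∀ i k : ℕ, ω i k = structConst mul e i k) :
    (∀ i : ℕ, Summable fun k => ‖ω i k‖ ^ 2) ∧
    (∀ i : ℕ, (∑' k : ℕ, ‖ω i k‖ ^ 2) = ‖mul (e i) (e i)‖ ^ 2) ∧
    Dense ((OmegaOp ω).domain : Set L2) ∧
    ((∀ k : ℕ, Summable fun i => ‖ω i k‖ ^ 2) → (OmegaOp ω).IsClosed) :=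
  stmt_6_general mul e ω hω

end
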